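/- arXiv:2412.00858 — 2 statements merged into one kernel-verified Lean document; each statement's English description precedes it below -/
import Mathlib

section
/- Let C ∈ ℂ^{r1×…×rd} be a Tucker core and U_j ∈ ℂ^{n_j×r_j} have orthonormal columns, Y = C ×_1 U_1 ⋯ ×_d U_d. Define P(Y)Z = Z ×_{j=1}^d U_j U_j* + ∑_{i=1}^d Z (×_{j≠i} U_j U_j*) ×_i (I − U_i U_i*). Then for any index set 𝓘 ⊆ {1,…,d} with |𝓘| ≥ 2 and any matrices Ũ_i with Ũ_i* U_i = 0 for i ∈ 𝓘, the tensor (P(Y)Z) (×_{j∉𝓘} U_j*) (×_{i∈𝓘} Ũ_i*) = 0. -/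
open Matrix Finset

/-!
Every term of `P(Y)Z` contracts `Z` with `U_j U_jᴴ` in all modes but at most one. Since `I` has
at least two elements, each term carries `U_i U_iᴴ` in some mode `i ∈ I`, and contracting
further with `W i` there gives `W i * U i * U iᴴ = 0`.
-/

noncomputable def multiProd {d : ℕ} {m n : Fin d → ℕ}
    (M : ∀ i, Matrix (Fin (m i)) (Fin (n i)) ℂ)
    (Z : (∀ i, Fin (n i)) → ℂ) : (∀ i, Fin (m i)) → ℂ :=
  fun k => ∑ j : ∀ i, Fin (n i), (∏ i, M i (k i) (j i)) * Z j

section MultiProd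

variable {d : ℕ} {m n p : Fin d → ℕ}

theorem multiProd_multiProd (W : ∀ i, Matrix (Fin (m i)) (Fin (n i)) ℂ)
    (M : ∀ i, Matrix (Fin (n i)) (Fin (p i)) ℂ) (Z : (∀ i, Fin (p i)) → ℂ) :
    multiProd W (multiProd M Z) = multiProd (fun i => W i * M i) Z := by
  funext k
  simp only [multiProd, Finset.mul_sum, Matrix.mul_apply]
  rw [Finset.sum_comm]
  refine Finset.sum_congr rfl fun l _ => ?_
  simp_rw [← mul_assoc, ← Finset.sum_mul, ← Finset.prod_mul_distrib]
  rw [Fintype.prod_sum]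

theorem multiProd_eq_zero_of_eq_zero {M : ∀ i, Matrix (Fin (m i)) (Fin (n i)) ℂ}
    (i : Fin d) (h : M i = 0) (Z : (∀ i, Fin (n i)) → ℂ) : multiProd M Z = 0 := by
  funext k
  refine Finset.sum_eq_zero fun j _ => ?_
  rw [Finset.prod_eq_zero (Finset.mem_univ i) (by simp [h]), zero_mul]

theorem multiProd_multiProd_eq_zero_of_mul_eq_zero {W : ∀ i, Matrix (Fin (m i)) (Fin (n i)) ℂ}
    {M : ∀ i, Matrix (Fin (n i)) (Fin (p i)) ℂ} (i : Fin d) (h : W i * M i = 0)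
    (Z : (∀ i, Fin (p i)) → ℂ) : multiProd W (multiProd M Z) = 0 := by
  rw [multiProd_multiProd]
  exact multiProd_eq_zero_of_eq_zero i h Z

theorem multiProd_add (W : ∀ i, Matrix (Fin (m i)) (Fin (n i)) ℂ)
    (A B : (∀ i, Fin (n i)) → ℂ) :
    multiProd W (A + B) = multiProd W A + multiProd W B := by
  funext k
  simp [multiProd, mul_add, Finset.sum_add_distrib]

theorem multiProd_sum {ι : Type*} (t : Finset ι) (W : ∀ i, Matrix (Fin (m i)) (Fin (n i)) ℂ)
    (A : ι → (∀ i, Fin (n i)) → ℂ) :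
    multiProd W (∑ x ∈ t, A x) = ∑ x ∈ t, multiProd W (A x) := by
  funext k
  simp only [multiProd, Finset.sum_apply, Finset.mul_sum]
  exact Finset.sum_comm

end MultiProd

theorem stmt5_general {d : ℕ} {n r s : Fin d → ℕ}
    (U : ∀ i, Matrix (Fin (n i)) (Fin (r i)) ℂ)
    (Z : (∀ i, Fin (n i)) → ℂ)
    (PZ : (∀ i, Fin (n i)) → ℂ)
    (hPZ : PZ = multiProd (fun j => U j * (U j)ᴴ) Z
      + ∑ i : Fin d,
          multiProd (fun j => if j = i then 1 - U j * (U j)ᴴ else U j * (U j)ᴴ) Z)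
    (I : Finset (Fin d)) (hI : 2 ≤ I.card)
    (W : ∀ i, Matrix (Fin (s i)) (Fin (n i)) ℂ)
    (hW : ∀ i ∈ I, W i * U i = 0) :
    multiProd W PZ = 0 := by
  have hWP : ∀ i ∈ I, W i * (U i * (U i)ᴴ) = 0 := fun i hi => by
    rw [← Matrix.mul_assoc, hW i hi, Matrix.zero_mul]
  obtain ⟨i₀, hi₀⟩ := Finset.card_pos.mp (by omega : 0 < I.card)
  rw [hPZ, multiProd_add, multiProd_sum,
    multiProd_multiProd_eq_zero_of_mul_eq_zero i₀ (hWP i₀ hi₀), zero_add]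
  refine Finset.sum_eq_zero fun i _ => ?_
  obtain ⟨j, hj, hji⟩ := Finset.exists_mem_ne (s := I) (by omega) i
  exact multiProd_multiProd_eq_zero_of_mul_eq_zero j (by simpa [if_neg hji] using hWP j hj) Z

/-- key vanishing property of the Tucker tangent-space projection
`P(Y)Z = Z ×_j U_jU_j* + ∑_i Z (×_{j≠i} U_jU_j*) ×_i (I − U_iU_i*)` (Koch–Lubich):
contracting it in at least two modes `i ∈ 𝓘` with matrices `W i = Ũ_i*` whose ranges are
orthogonal to `U_i` (and with arbitrary matrices, e.g. `U_j*`, in the remaining modes)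
yields the zero tensor. -/
theorem stmt5 {d : ℕ} {n r s : Fin d → ℕ}
    (U : ∀ i, Matrix (Fin (n i)) (Fin (r i)) ℂ)
    (hU : ∀ i, (U i)ᴴ * U i = 1)
    (C : (∀ i, Fin (r i)) → ℂ)
    (Z : (∀ i, Fin (n i)) → ℂ)
    (Y : (∀ i, Fin (n i)) → ℂ) (hY : Y = multiProd U C)
    (PZ : (∀ i, Fin (n i)) → ℂ)
    (hPZ : PZ = multiProd (fun j => U j * (U j)ᴴ) Z
      + ∑ i : Fin d,
          multiProd (fun j => if j = i then 1 - U j * (U j)ᴴ else U j * (U j)ᴴ) Z)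
    (I : Finset (Fin d)) (hI : 2 ≤ I.card)
    (W : ∀ i, Matrix (Fin (s i)) (Fin (n i)) ℂ)
    (hW : ∀ i ∈ I, W i * U i = 0) :
    multiProd W PZ = 0 :=
  stmt5_general U Z PZ hPZ I hI W hW
end

section
/- (Rank truncation error for TTNs, matrix case base step) Let X = U S V* with Û, V̂ orthonormal and S ∈ ℂ^{p×p}, and let S_r be the best rank-r truncation of S with (∑_{k>r} σ_k(S)²)^{1/2} ≤ ϑ. Then ‖U S V* − U S_r V*‖_F ≤ ϑ. More generally, performing such tolerance-ϑ truncations at each of the d_τ − 1 non-root nodes of an orthonormal tree tensor network X_τ with root core C_τ yields a truncated network X̃_τ with ‖X_τ − X̃_τ‖ ≤ (‖C_τ‖(d_τ − 1) + 1) ϑ. -/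
open Matrix Finset

attribute [local instance] Matrix.frobeniusNormedAddCommGroup Matrix.frobeniusNormedSpace

lemma stmt19_cstar_re (z : ℂ) : ‖z‖ ^ (2:ℝ) = (star z * z).re := by
  rw [Complex.star_def, mul_comm, Complex.mul_conj, Complex.ofReal_re,
    Complex.normSq_eq_norm_sq, ← Real.rpow_natCast]
  norm_num

lemma stmt19_norm_eq_sqrt_trace {a b : ℕ} (M : Matrix (Fin a) (Fin b) ℂ) :
    ‖M‖ = Real.sqrt ((Matrix.trace (Mᴴ * M)).re) := by
  rw [Matrix.frobenius_norm_def, Real.sqrt_eq_rpow]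
  congr 1
  simp only [Matrix.trace, Matrix.diag_apply, Matrix.mul_apply, Matrix.conjTranspose_apply,
    Complex.re_sum, stmt19_cstar_re, Complex.star_def]
  exact Finset.sum_comm

lemma stmt19_vmv_conjT {a b : ℕ} (w : Fin a → ℂ) (v : Fin b → ℂ) :
    (vecMulVec w v)ᴴ = vecMulVec (star v) (star w) := by
  ext i j
  simp [Matrix.conjTranspose_apply, Matrix.vecMulVec_apply, mul_comm]

lemma stmt19_trace_vmv_mul {a b : ℕ} (w : Fin a → ℂ) (v : Fin b → ℂ) (c : Fin b → ℂ)
    (d : Fin a → ℂ) :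
    Matrix.trace (vecMulVec w v * vecMulVec c d) = (v ⬝ᵥ c) * (w ⬝ᵥ d) := by
  simp only [Matrix.trace, Matrix.diag_apply, Matrix.mul_apply, Matrix.vecMulVec_apply,
    dotProduct, Finset.sum_mul, Finset.mul_sum]
  exact Finset.sum_congr rfl fun x _ => Finset.sum_congr rfl fun i _ => by ring

lemma stmt19_chain {E : Type} [NormedAddCommGroup E] (ϑ normCτ : ℝ) (W : ℕ → E)
    (h1 : ‖W 1 - W 0‖ ≤ ϑ) :
    ∀ n : ℕ, 1 ≤ n → (∀ j, 1 ≤ j → j < n → ‖W (j + 1) - W j‖ ≤ normCτ * ϑ) →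
      ‖W n - W 0‖ ≤ ϑ + (n - 1 : ℕ) * (normCτ * ϑ) := by
  intro n
  induction n with
  | zero => omega
  | succ k ih =>
    intro _ hb
    rcases Nat.eq_or_lt_of_le (show 1 ≤ k + 1 from by omega) with h | h
    · simpa [← h] using h1
    · have hk : 1 ≤ k := by omega
      have ihk := ih hk (fun j hj1 hj2 => hb j hj1 (by omega))
      calc ‖W (k + 1) - W 0‖ = ‖(W (k + 1) - W k) + (W k - W 0)‖ := by abel_nf
        _ ≤ ‖W (k + 1) - W k‖ + ‖W k - W 0‖ := norm_add_le _ _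
        _ ≤ normCτ * ϑ + (ϑ + (k - 1 : ℕ) * (normCτ * ϑ)) :=
            add_le_add (hb k hk (by omega)) ihk
        _ = ϑ + ((k - 1 : ℕ) + 1) * (normCτ * ϑ) := by ring
        _ = ϑ + ((k + 1) - 1 : ℕ) * (normCτ * ϑ) := by
            congr 2
            push_cast [Nat.cast_sub hk]
            ring

/-- rank truncation error.  Base (matrix) step: if `X = U S V*` with
orthonormal factors and `S_r` is the best rank-`r` SVD truncation of `S` (written through
the singular value decomposition `S = ∑ σ_k u_k v_k*`) with singular value tail
`(∑_{k>r} σ_k²)^{1/2} ≤ ϑ`, then `‖U S V* − U S_r V*‖_F ≤ ϑ`.  General step: performing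
such tolerance-`ϑ` truncations at each of the `dτ − 1` non-root nodes of an orthonormal
tree tensor network (a chain `W 0 = X_τ, …, W (dτ−1) = X̃_τ` of intermediate networks,
one truncation contributing at most `ϑ` and each of the remaining ones at most `‖C_τ‖ ϑ`)
yields `‖X_τ − X̃_τ‖ ≤ (‖C_τ‖ (dτ − 1) + 1) ϑ`. -/
theorem stmt19 {m n p r : ℕ} (ϑ : ℝ) (hϑ : 0 ≤ ϑ)
    (U : Matrix (Fin m) (Fin p) ℂ) (V : Matrix (Fin n) (Fin p) ℂ)
    (hU : Uᴴ * U = 1) (hV : Vᴴ * V = 1)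
    (σ : Fin p → ℝ) (hσnonneg : ∀ k, 0 ≤ σ k)
    (hσmono : ∀ k l : Fin p, k ≤ l → σ l ≤ σ k)
    (u v : Fin p → Fin p → ℂ)
    (hu : ∀ k l, dotProduct (star (u k)) (u l) = if k = l then 1 else 0)
    (hv : ∀ k l, dotProduct (star (v k)) (v l) = if k = l then 1 else 0)
    (S Sr : Matrix (Fin p) (Fin p) ℂ)
    (hS : S = ∑ k : Fin p, (σ k : ℂ) • vecMulVec (u k) (star (v k)))
    (hSr : Sr = ∑ k ∈ Finset.univ.filter (fun k : Fin p => (k : ℕ) < r),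
      (σ k : ℂ) • vecMulVec (u k) (star (v k)))
    (htail : Real.sqrt (∑ k ∈ Finset.univ.filter (fun k : Fin p => r ≤ (k : ℕ)), σ k ^ 2) ≤ ϑ) :
    ‖U * S * Vᴴ - U * Sr * Vᴴ‖ ≤ ϑ ∧
    ∀ (E : Type) [inst : NormedAddCommGroup E],
      ∀ (dτ : ℕ), 2 ≤ dτ →
      ∀ (normCτ : ℝ), 0 ≤ normCτ →
      ∀ (W : ℕ → E),
        ‖W 1 - W 0‖ ≤ ϑ →
        (∀ j, 1 ≤ j → j < dτ - 1 → ‖W (j + 1) - W j‖ ≤ normCτ * ϑ) →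
        ‖W (dτ - 1) - W 0‖ ≤ (normCτ * (dτ - 1) + 1) * ϑ := by
  constructor
  · -- matrix part
    set T : Finset (Fin p) := Finset.univ.filter (fun k : Fin p => r ≤ (k : ℕ)) with hT
    have hA : S - Sr = ∑ k ∈ T, (σ k : ℂ) • vecMulVec (u k) (star (v k)) := by
      have hsplit := Finset.sum_filter_add_sum_filter_not Finset.univ
        (fun k : Fin p => (k : ℕ) < r) (fun k => (σ k : ℂ) • vecMulVec (u k) (star (v k)))
      have hfe : Finset.univ.filter (fun k : Fin p => ¬ (k : ℕ) < r) = T := by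
        simp [hT, not_lt]
      rw [hS, hSr, ← hsplit, hfe]
      abel
    have key : Matrix.trace ((S - Sr)ᴴ * (S - Sr))
        = ((∑ k ∈ T, σ k ^ 2 : ℝ) : ℂ) := by
      rw [hA, Matrix.conjTranspose_sum]
      simp only [Matrix.conjTranspose_smul, stmt19_vmv_conjT, star_star,
        Complex.star_def, Complex.conj_ofReal]
      rw [Finset.sum_mul_sum]
      rw [Matrix.trace_sum]
      have : ∀ k ∈ T, Matrix.trace (∑ l ∈ T,
          ((σ k : ℂ) • vecMulVec (v k) (star (u k))) *
            ((σ l : ℂ) • vecMulVec (u l) (star (v l)))) = ((σ k ^ 2 : ℝ) : ℂ) := by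
        intro k hk
        rw [Matrix.trace_sum]
        rw [Finset.sum_eq_single k]
        · rw [Matrix.smul_mul, Matrix.mul_smul, Matrix.trace_smul, Matrix.trace_smul,
            stmt19_trace_vmv_mul, hu k k]
          have h2 : (v k) ⬝ᵥ star (v k) = 1 := by
            rw [dotProduct_comm, hv k k]; simp
          simp [h2]
          push_cast; ring
        · intro l hl hlk
          rw [Matrix.smul_mul, Matrix.mul_smul, Matrix.trace_smul, Matrix.trace_smul,
            stmt19_trace_vmv_mul, hu k l]
          simp [hlk, Ne.symm hlk, if_neg]
        · intro hk'; exact absurd hk hk'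
      rw [Finset.sum_congr rfl this]
      push_cast
      ring
    have hnorm : ‖U * S * Vᴴ - U * Sr * Vᴴ‖
        = Real.sqrt ((∑ k ∈ T, σ k ^ 2 : ℝ)) := by
      have hfactor : U * S * Vᴴ - U * Sr * Vᴴ = U * (S - Sr) * Vᴴ := by
        rw [Matrix.mul_sub, Matrix.sub_mul]
      rw [hfactor, stmt19_norm_eq_sqrt_trace]
      have hct : (U * (S - Sr) * Vᴴ)ᴴ * (U * (S - Sr) * Vᴴ)
          = V * ((S - Sr)ᴴ * (S - Sr)) * Vᴴ := by
        simp only [Matrix.conjTranspose_mul, Matrix.conjTranspose_conjTranspose,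
          Matrix.mul_assoc]
        rw [← Matrix.mul_assoc Uᴴ U, hU, Matrix.one_mul]
      rw [hct, Matrix.trace_mul_cycle, ← Matrix.mul_assoc, hV, Matrix.one_mul, key,
        Complex.ofReal_re]
    rw [hnorm]
    exact htail
  · -- chain part
    intro E _ dτ hd normCτ hC W h1 hb
    have hchain := stmt19_chain ϑ normCτ W h1 (dτ - 1) (by omega) hb
    refine hchain.trans ?_
    have hcast : ((dτ - 1 - 1 : ℕ) : ℝ) ≤ (dτ : ℝ) - 1 := by
      have : ((dτ - 1 - 1 : ℕ) : ℝ) ≤ ((dτ - 1 : ℕ) : ℝ) := by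
        exact_mod_cast Nat.sub_le _ _
      refine this.trans ?_
      have : ((dτ - 1 : ℕ) : ℝ) = (dτ : ℝ) - 1 := by
        push_cast [Nat.cast_sub (by omega : 1 ≤ dτ)]; ring
      rw [this]
    have hnn : 0 ≤ normCτ * ϑ := mul_nonneg hC hϑ
    nlinarith [mul_le_mul_of_nonneg_left hcast hnn]
end
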